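/- Let A₁, A₂, A₃ ∈ B(H) with A₁, A₂ positive and the block operator [[A₁, A₃*],[A₃, A₂]] positive on H ⊕ H. Then for any unit vector u and r ≥ 1, |⟨A₃u,u⟩|^(2r) ≤ (1/4)⟨(A₁^(2r) + A₂^(2r))u,u⟩ + (1/2)|⟨A₁u, A₂u⟩|^r. -/

import Mathlib

open scoped InnerProductSpace ComplexOrder NNReal
open ContinuousLinearMap

/-- Convexity of `t ^ r` for `r ≥ 1`: midpoint version. -/
lemma aux_half_rpow {p q r : ℝ} (hp : 0 ≤ p) (hq : 0 ≤ q) (hr : 1 ≤ r) :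
    ((p + q) / 2) ^ r ≤ (p ^ r + q ^ r) / 2 := by
  have h := NNReal.rpow_arith_mean_le_arith_mean2_rpow (1/2) (1/2)
    p.toNNReal q.toNNReal (add_halves 1) hr
  have h' := (NNReal.coe_le_coe).2 h
  push_cast at h'
  rw [Real.coe_toNNReal p hp, Real.coe_toNNReal q hq] at h'
  calc ((p + q) / 2) ^ r = (1/2 * p + 1/2 * q) ^ r := by ring_nf
    _ ≤ 1/2 * p ^ r + 1/2 * q ^ r := h'
    _ = (p ^ r + q ^ r) / 2 := by ring

/-- Tangent line inequality for `y ^ p`, `p ≥ 1` (Bernoulli). -/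
lemma aux_tangent {c y p : ℝ} (hc : 0 < c) (hy : 0 ≤ y) (hp : 1 ≤ p) :
    c ^ p + p * c ^ (p - 1) * (y - c) ≤ y ^ p := by
  have hs : -1 ≤ y / c - 1 := by
    have : 0 ≤ y / c := div_nonneg hy hc.le
    linarith
  have h := one_add_mul_self_le_rpow_one_add hs hp
  rw [show (1 + (y / c - 1)) = y / c by ring] at h
  have hcp : (0:ℝ) < c ^ p := Real.rpow_pos_of_pos hc p
  have h3 : (y / c) ^ p = y ^ p / c ^ p := Real.div_rpow hy hc.le p
  have h4 : (1 + p * (y / c - 1)) * c ^ p ≤ y ^ p := by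
    have := mul_le_mul_of_nonneg_right h hcp.le
    rwa [h3, div_mul_cancel₀ _ hcp.ne'] at this
  have h5 : c ^ (p - 1) * c = c ^ p := by
    rw [← Real.rpow_add_one hc.ne' (p - 1)]; ring_nf
  refine le_trans (le_of_eq ?_) h4
  field_simp
  linear_combination p * (y - c) * h5

/-- Buzano's inequality. -/
lemma aux_buzano {H : Type*} [NormedAddCommGroup H] [InnerProductSpace ℂ H]
    (x y e : H) (he : ‖e‖ = 1) :
    ‖⟪x, e⟫_ℂ * ⟪e, y⟫_ℂ‖ ≤ (‖x‖ * ‖y‖ + ‖⟪x, y⟫_ℂ‖) / 2 := by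
  set z := (2 * ⟪e, y⟫_ℂ) • e - y with hzdef
  have hnz : ‖z‖ = ‖y‖ := by
    have h2 : ‖z‖ ^ 2 = ‖y‖ ^ 2 := by
      rw [hzdef, @norm_sub_sq ℂ]
      rw [inner_smul_left, norm_smul, he]
      simp only [map_mul, mul_one]
      rw [mul_assoc, mul_comm ((starRingEnd ℂ) ⟪e, y⟫_ℂ) ⟪e, y⟫_ℂ, Complex.mul_conj]
      simp [norm_mul, Complex.normSq_eq_norm_sq, ← Complex.ofReal_pow,
        Complex.ofReal_re]
      ring
    calc ‖z‖ = √(‖z‖ ^ 2) := (Real.sqrt_sq (norm_nonneg _)).symm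
      _ = √(‖y‖ ^ 2) := by rw [h2]
      _ = ‖y‖ := Real.sqrt_sq (norm_nonneg _)
  have hinner : ⟪x, z⟫_ℂ = 2 * ⟪e, y⟫_ℂ * ⟪x, e⟫_ℂ - ⟪x, y⟫_ℂ := by
    rw [hzdef, inner_sub_right, inner_smul_right]
  have hcs : ‖⟪x, z⟫_ℂ‖ ≤ ‖x‖ * ‖y‖ := hnz ▸ norm_inner_le_norm x z
  have h2 : 2 * ‖⟪x, e⟫_ℂ * ⟪e, y⟫_ℂ‖ ≤ ‖x‖ * ‖y‖ + ‖⟪x, y⟫_ℂ‖ := by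
    calc 2 * ‖⟪x, e⟫_ℂ * ⟪e, y⟫_ℂ‖ = ‖⟪x, z⟫_ℂ + ⟪x, y⟫_ℂ‖ := by
          rw [hinner]; rw [sub_add_cancel]
          rw [show (2 : ℂ) * ⟪e, y⟫_ℂ * ⟪x, e⟫_ℂ = 2 * (⟪x, e⟫_ℂ * ⟪e, y⟫_ℂ) by ring]
          simp [norm_mul]
      _ ≤ ‖⟪x, z⟫_ℂ‖ + ‖⟪x, y⟫_ℂ‖ := norm_add_le _ _
      _ ≤ ‖x‖ * ‖y‖ + ‖⟪x, y⟫_ℂ‖ := by linarith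
  linarith

/-- Operator Jensen (McCarthy) inequality. -/
lemma aux_jensen {H : Type*} [NormedAddCommGroup H] [InnerProductSpace ℂ H] [CompleteSpace H]
    (A : H →L[ℂ] H) (hA : 0 ≤ A) {r : ℝ} (hr : 1 ≤ r) (u : H) (hu : ‖u‖ = 1) :
    ‖A u‖ ^ (2 * r) ≤ (⟪(A ^ (2 * r)) u, u⟫_ℂ).re := by
  have hsa : IsSelfAdjoint A := ((nonneg_iff_isPositive A).1 hA).isSelfAdjoint
  obtain ⟨c, hcdef⟩ : ∃ c : ℝ, c = ‖A u‖ ^ 2 := ⟨_, rfl⟩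
  have hc0 : 0 ≤ c := by rw [hcdef]; positivity
  have hAA : (⟪(A * A) u, u⟫_ℂ).re = c := by
    have h : ⟪(A * A) u, u⟫_ℂ = ⟪A u, A u⟫_ℂ := by
      rw [ContinuousLinearMap.mul_apply, ← adjoint_inner_right, hsa.adjoint_eq]
    rw [h, inner_self_eq_norm_sq_to_K (𝕜 := ℂ) (A u)]
    simp [← Complex.ofReal_pow, hcdef]
  have hgoal : ‖A u‖ ^ (2 * r) = c ^ r := by
    rw [hcdef, ← Real.rpow_natCast (‖A u‖) 2, ← Real.rpow_mul (norm_nonneg _)]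
    norm_num
  rw [hgoal]
  have hpow_nonneg : (0 : H →L[ℂ] H) ≤ A ^ (2 * r) := CFC.rpow_nonneg
  rcases eq_or_lt_of_le hc0 with hc | hc
  · rw [← hc, Real.zero_rpow (by linarith)]
    exact (Complex.nonneg_iff.1 (((nonneg_iff_isPositive _).1 hpow_nonneg).inner_nonneg_left u)).1
  have h1 : A ^ (2 * r) = cfc (fun x : ℝ => x ^ (2 * r)) A := by
    rw [CFC.rpow_def, cfc_nnreal_eq_real _ A hA]
    apply cfc_congr
    intro x hx
    have hx0 : 0 ≤ x := spectrum_nonneg_of_nonneg hA hx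
    simp [NNReal.coe_rpow, Real.coe_toNNReal x hx0]
  have h2 : cfc (fun x : ℝ => (c ^ r - r * c ^ r) + (r * c ^ (r - 1)) * x ^ 2) A
      = (c ^ r - r * c ^ r) • (1 : H →L[ℂ] H) + (r * c ^ (r - 1)) • (A * A) := by
    rw [cfc_add (a := A) (fun _ => c ^ r - r * c ^ r) (fun x => (r * c ^ (r - 1)) * x ^ 2)
      continuousOn_const ((continuous_const.mul (continuous_pow 2)).continuousOn)]
    rw [cfc_const _ _, cfc_const_mul _ _ _ ((continuous_pow 2).continuousOn)]
    rw [cfc_pow_id (R := ℝ) A 2]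
    simp [Algebra.algebraMap_eq_smul_one, sq]
  have key : (c ^ r - r * c ^ r) • (1 : H →L[ℂ] H) + (r * c ^ (r - 1)) • (A * A)
      ≤ A ^ (2 * r) := by
    rw [h1, ← h2]
    apply cfc_mono
    · intro x hx
      have hx0 : 0 ≤ x := spectrum_nonneg_of_nonneg hA hx
      have ht := aux_tangent hc (by positivity : (0:ℝ) ≤ x ^ 2) hr
      have hxx : ((x : ℝ) ^ (2:ℕ)) ^ r = x ^ (2 * r) := by
        rw [← Real.rpow_natCast x 2, ← Real.rpow_mul hx0]
        norm_num
      rw [hxx] at ht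
      have h5 : c ^ (r - 1) * c = c ^ r := by
        rw [← Real.rpow_add_one hc.ne' (r - 1)]; ring_nf
      have heq : c ^ r - r * c ^ r + r * c ^ (r - 1) * x ^ 2
          = c ^ r + r * c ^ (r - 1) * (x ^ 2 - c) := by linear_combination r * h5
      rw [heq]
      exact ht
    · exact (continuous_const.add (continuous_const.mul (continuous_pow 2))).continuousOn
    · exact (Real.continuous_rpow_const (by linarith)).continuousOn
  have hposdiff := ((le_def _ _).1 key).inner_nonneg_left u
  have hexpand : (⟪((c ^ r - r * c ^ r) • (1 : H →L[ℂ] H)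
      + (r * c ^ (r - 1)) • (A * A)) u, u⟫_ℂ).re
      = (c ^ r - r * c ^ r) + (r * c ^ (r - 1)) * c := by
    simp only [ContinuousLinearMap.add_apply, inner_add_left, Complex.add_re,
      ContinuousLinearMap.smul_apply, RCLike.real_smul_eq_coe_smul (K := ℂ),
      inner_smul_left, Complex.conj_ofReal, Complex.re_ofReal_mul,
      ContinuousLinearMap.one_apply]
    have hAA' : (⟪A (A u), u⟫_ℂ).re = c := by
      rw [← ContinuousLinearMap.mul_apply]; exact hAA
    rw [inner_self_eq_norm_sq_to_K (𝕜 := ℂ) u]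
    simp [hu, hAA', ← Complex.ofReal_pow]
  have hrc : r * c ^ (r - 1) * c = r * c ^ r := by
    rw [mul_assoc, ← Real.rpow_add_one hc.ne' (r - 1)]
    ring_nf
  have hfin : 0 ≤ (⟪(A ^ (2 * r)) u, u⟫_ℂ).re
      - ((c ^ r - r * c ^ r) + (r * c ^ (r - 1)) * c) := by
    have heq : (⟪((A ^ (2 * r)) - ((c ^ r - r * c ^ r) • (1 : H →L[ℂ] H)
        + (r * c ^ (r - 1)) • (A * A))) u, u⟫_ℂ).re
        = (⟪(A ^ (2 * r)) u, u⟫_ℂ).re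
          - (⟪((c ^ r - r * c ^ r) • (1 : H →L[ℂ] H)
            + (r * c ^ (r - 1)) • (A * A)) u, u⟫_ℂ).re := by
      rw [ContinuousLinearMap.sub_apply, inner_sub_left, Complex.sub_re]
    rw [← hexpand, ← heq]
    exact (Complex.nonneg_iff.1 hposdiff).1
  nlinarith [hfin, hrc]

theorem stmt_16 {H : Type*} [NormedAddCommGroup H] [InnerProductSpace ℂ H]
    [CompleteSpace H] (A₁ A₂ A₃ : H →L[ℂ] H)
    (hA₁ : 0 ≤ A₁) (hA₂ : 0 ≤ A₂)
    (hblock : ∀ u v : H,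
      0 ≤ ⟪A₁ u + adjoint A₃ v, u⟫_ℂ + ⟪A₃ u + A₂ v, v⟫_ℂ)
    (r : ℝ) (hr : 1 ≤ r) (u : H) (hu : ‖u‖ = 1) :
    ‖⟪A₃ u, u⟫_ℂ‖ ^ (2 * r) ≤
      (1 / 4) * (⟪(A₁ ^ (2 * r) + A₂ ^ (2 * r)) u, u⟫_ℂ).re +
        (1 / 2) * ‖⟪A₁ u, A₂ u⟫_ℂ‖ ^ r := by
  have hP₁ := (nonneg_iff_isPositive A₁).1 hA₁
  have hP₂ := (nonneg_iff_isPositive A₂).1 hA₂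
  set z : ℂ := ⟪A₃ u, u⟫_ℂ with hzdef
  set a : ℝ := (⟪A₁ u, u⟫_ℂ).re with hadef
  set b : ℝ := (⟪A₂ u, u⟫_ℂ).re with hbdef
  have hA1r : ((a : ℂ)) = ⟪A₁ u, u⟫_ℂ := ((isPositive_iff_complex A₁).1 hP₁ u).1
  have hA2r : ((b : ℂ)) = ⟪A₂ u, u⟫_ℂ := ((isPositive_iff_complex A₂).1 hP₂ u).1
  have ha0 : 0 ≤ a := ((isPositive_iff_complex A₁).1 hP₁ u).2
  have hb0 : 0 ≤ b := ((isPositive_iff_complex A₂).1 hP₂ u).2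
  -- Step 1: Cauchy-Schwarz for the block operator
  have step1 : ∀ t : ℝ, 0 ≤ (Complex.normSq z * b) * (t * t)
      + (-(2 * Complex.normSq z)) * t + a := by
    intro t
    have h := hblock u ((-(t : ℂ) * (starRingEnd ℂ) z) • u)
    have hE : ⟪A₁ u + adjoint A₃ ((-(t : ℂ) * (starRingEnd ℂ) z) • u), u⟫_ℂ
        + ⟪A₃ u + A₂ ((-(t : ℂ) * (starRingEnd ℂ) z) • u),
            ((-(t : ℂ) * (starRingEnd ℂ) z) • u)⟫_ℂ
        = ((Complex.normSq z * b) * (t * t) + (-(2 * Complex.normSq z)) * t + a : ℝ) := by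
      simp only [inner_add_left, ContinuousLinearMap.map_smul, inner_smul_left,
        inner_smul_right, adjoint_inner_left, inner_conj_symm, ← hA1r, ← hA2r,
        map_mul, map_neg, Complex.conj_conj, Complex.conj_ofReal]
      push_cast
      rw [← Complex.mul_conj]
      rw [show ⟪u, A₃ u⟫_ℂ = (starRingEnd ℂ) z from by
        rw [hzdef]; exact (inner_conj_symm _ _).symm]
      ring
    rw [hE] at h
    exact_mod_cast h
  have hd := discrim_le_zero step1
  have hnsq : Complex.normSq z = ‖z‖ ^ 2 := by
    rw [Complex.normSq_eq_norm_sq]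
  rw [discrim] at hd
  rw [hnsq] at hd
  -- derive ‖z‖^2 ≤ a * b
  have step2 : ‖z‖ ^ 2 ≤ a * b := by
    rcases eq_or_lt_of_le (norm_nonneg z) with h0 | h0
    · rw [← h0]
      simpa using mul_nonneg ha0 hb0
    · nlinarith [hd, mul_pos h0 h0, sq_nonneg ‖z‖]
  -- Buzano
  have hbuz := aux_buzano (A₁ u) (A₂ u) u hu
  have hab : a * b ≤ (‖A₁ u‖ * ‖A₂ u‖ + ‖⟪A₁ u, A₂ u⟫_ℂ‖) / 2 := by
    have h1 : ⟪u, A₂ u⟫_ℂ = (b : ℂ) := by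
      rw [← inner_conj_symm, ← hA2r, Complex.conj_ofReal]
    rw [← hA1r, h1] at hbuz
    calc a * b = ‖((a : ℂ)) * ((b : ℂ))‖ := by
          rw [← Complex.ofReal_mul]
          rw [Complex.norm_real]
          exact (abs_of_nonneg (by positivity)).symm
      _ ≤ _ := hbuz
  -- Jensen
  have hj1 := aux_jensen A₁ hA₁ hr u hu
  have hj2 := aux_jensen A₂ hA₂ hr u hu
  set m₁ : ℝ := ‖A₁ u‖
  set m₂ : ℝ := ‖A₂ u‖
  set w : ℝ := ‖⟪A₁ u, A₂ u⟫_ℂ‖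
  have hr0 : 0 ≤ r := by linarith
  -- rpow algebra
  have hsq : ∀ s : ℝ, 0 ≤ s → (s ^ 2) ^ r = s ^ (2 * r) := by
    intro s hs
    rw [← Real.rpow_natCast s 2, ← Real.rpow_mul hs]
    norm_num
  -- chain
  have c1 : ‖z‖ ^ (2 * r) ≤ (a * b) ^ r := by
    rw [← hsq ‖z‖ (norm_nonneg z)]
    exact Real.rpow_le_rpow (by positivity) step2 hr0
  have c2 : (a * b) ^ r ≤ ((m₁ * m₂) ^ r + w ^ r) / 2 := by
    calc (a * b) ^ r ≤ ((m₁ * m₂ + w) / 2) ^ r :=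
          Real.rpow_le_rpow (by positivity) hab hr0
      _ ≤ ((m₁ * m₂) ^ r + w ^ r) / 2 :=
          aux_half_rpow (by positivity) (by positivity) hr
  have c3 : (m₁ * m₂) ^ r ≤ (m₁ ^ (2 * r) + m₂ ^ (2 * r)) / 2 := by
    calc (m₁ * m₂) ^ r ≤ ((m₁ ^ 2 + m₂ ^ 2) / 2) ^ r := by
          apply Real.rpow_le_rpow (by positivity) _ hr0
          nlinarith [sq_nonneg (m₁ - m₂)]
      _ ≤ ((m₁ ^ 2) ^ r + (m₂ ^ 2) ^ r) / 2 :=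
          aux_half_rpow (by positivity) (by positivity) hr
      _ = (m₁ ^ (2 * r) + m₂ ^ (2 * r)) / 2 := by
          rw [hsq m₁ (norm_nonneg _), hsq m₂ (norm_nonneg _)]
  have hsum : (⟪(A₁ ^ (2 * r) + A₂ ^ (2 * r)) u, u⟫_ℂ).re
      = (⟪(A₁ ^ (2 * r)) u, u⟫_ℂ).re + (⟪(A₂ ^ (2 * r)) u, u⟫_ℂ).re := by
    rw [ContinuousLinearMap.add_apply, inner_add_left, Complex.add_re]
  have hw0 : 0 ≤ w ^ r := Real.rpow_nonneg (norm_nonneg _) r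
  rw [hsum]
  linarith [c1, c2, c3, hj1, hj2]
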